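/- Let Y : [0,∞) → E be a C² curve in a real inner product space such that ⟨Y'(s), Y(s)⟩ > 0 for all s > 0, Y(0) = 0, Y'(0) ≠ 0, and ⟨Y''(s), Y(s)⟩ ≥ 0 for all s ≥ 0. Then s·⟨Y'(s), Y(s)⟩ ≥ ‖Y(s)‖² for all s > 0. -/

import Mathlib

open scoped RealInnerProductSpace

/-- Jacobi-field comparison: if `Y` is a C² curve in a real inner product space with
`Y(0) = 0`, `Y'(0) ≠ 0`, `⟪Y'(s), Y(s)⟫ > 0` for `s > 0` and `⟪Y''(s), Y(s)⟫ ≥ 0` for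
`s ≥ 0` (nonpositive radial curvature via the Jacobi equation), then
`s·⟪Y'(s), Y(s)⟫ ≥ ‖Y(s)‖²` for all `s > 0`. -/
theorem stmt_2 {E : Type*} [NormedAddCommGroup E] [InnerProductSpace ℝ E]
    (Y : ℝ → E) (hY : ContDiff ℝ 2 Y)
    (hpos : ∀ s : ℝ, 0 < s → 0 < ⟪deriv Y s, Y s⟫)
    (h0 : Y 0 = 0) (h0' : deriv Y 0 ≠ 0)
    (hcurv : ∀ s : ℝ, 0 ≤ s → 0 ≤ ⟪deriv (deriv Y) s, Y s⟫) :
    ∀ s : ℝ, 0 < s → ‖Y s‖ ^ 2 ≤ s * ⟪deriv Y s, Y s⟫ := by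
  have hYd : Differentiable ℝ Y := hY.differentiable two_ne_zero
  have hY'd : Differentiable ℝ (deriv Y) := by
    have := (contDiff_succ_iff_deriv (n := 1) (f := Y)).mp (by norm_num [hY])
    exact this.2.2.differentiable one_ne_zero
  set u : ℝ → ℝ := fun s => ⟪Y s, Y s⟫ with hu
  set p : ℝ → ℝ := fun s => ⟪deriv Y s, Y s⟫ with hp
  set q : ℝ → ℝ := fun s => ⟪deriv Y s, deriv Y s⟫ + ⟪deriv (deriv Y) s, Y s⟫ with hq
  set v : ℝ → ℝ := fun s => Real.sqrt (u s) with hv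
  set φ : ℝ → ℝ := fun s => p s / v s with hφ
  have huder : ∀ s, HasDerivAt u (2 * p s) s := by
    intro s
    have := ((hYd s).hasDerivAt).inner ℝ ((hYd s).hasDerivAt)
    have h2 : ⟪Y s, deriv Y s⟫ + ⟪deriv Y s, Y s⟫ = 2 * p s := by
      simp only [hp]; rw [real_inner_comm (Y s)]; ring
    rw [h2] at this
    exact this
  have hpder : ∀ s, HasDerivAt p (q s) s := by
    intro s
    exact ((hY'd s).hasDerivAt).inner ℝ ((hYd s).hasDerivAt)
  have hupos : ∀ s, 0 < s → 0 < u s := by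
    intro s hs
    have hne : Y s ≠ 0 := by
      intro h
      have := hpos s hs
      rw [h, inner_zero_right] at this
      exact lt_irrefl 0 this
    have : u s = ‖Y s‖ ^ 2 := real_inner_self_eq_norm_sq (Y s)
    rw [this]
    exact pow_pos (norm_pos_iff.mpr hne) 2
  have hvpos : ∀ s, 0 < s → 0 < v s := fun s hs => Real.sqrt_pos.mpr (hupos s hs)
  have hvsq : ∀ s, v s ^ 2 = u s := by
    intro s
    exact Real.sq_sqrt real_inner_self_nonneg
  have hvder : ∀ s, 0 < s → HasDerivAt v (p s / v s) s := by
    intro s hs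
    have hus : u s ≠ 0 := ne_of_gt (hupos s hs)
    have := (Real.hasDerivAt_sqrt hus).comp s (huder s)
    have heq : 1 / (2 * Real.sqrt (u s)) * (2 * p s) = p s / v s := by
      rw [hv]; field_simp
    rw [heq] at this
    exact this
  have hφder : ∀ s, 0 < s →
      HasDerivAt φ ((q s * v s - p s * (p s / v s)) / (v s) ^ 2) s := by
    intro s hs
    exact (hpder s).div (hvder s hs) (ne_of_gt (hvpos s hs))
  have hφnonneg : ∀ s, 0 < s → 0 ≤ (q s * v s - p s * (p s / v s)) / (v s) ^ 2 := by
    intro s hs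
    apply div_nonneg _ (sq_nonneg _)
    have hcs : p s * p s ≤ ⟪deriv Y s, deriv Y s⟫ * u s :=
      real_inner_mul_inner_self_le (deriv Y s) (Y s)
    have hvp := hvpos s hs
    rw [sub_nonneg]
    have hq' : ⟪deriv Y s, deriv Y s⟫ ≤ q s := by
      have := hcurv s hs.le
      simp only [hq]; linarith
    have hmain : p s * p s ≤ q s * v s * v s := by
      calc p s * p s ≤ ⟪deriv Y s, deriv Y s⟫ * u s := hcs
        _ = ⟪deriv Y s, deriv Y s⟫ * (v s * v s) := by rw [← hvsq s]; ring
        _ ≤ q s * (v s * v s) := mul_le_mul_of_nonneg_right hq' (mul_self_nonneg _)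
        _ = q s * v s * v s := by ring
    have : p s * (p s / v s) = p s * p s / v s := by ring
    rw [this, div_le_iff₀ hvp]
    exact hmain
  have hmono : MonotoneOn φ (Set.Ioi (0 : ℝ)) := by
    apply monotoneOn_of_deriv_nonneg (convex_Ioi 0)
    · intro x hx
      exact ((hφder x hx).differentiableAt).continuousAt.continuousWithinAt
    · rw [interior_Ioi]
      intro x hx
      exact ((hφder x hx).differentiableAt).differentiableWithinAt
    · rw [interior_Ioi]
      intro x hx
      rw [(hφder x hx).deriv]
      exact hφnonneg x hx
  intro t ht
  have hvcont : Continuous v := by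
    apply Real.continuous_sqrt.comp
    exact (hYd.continuous).inner (hYd.continuous)
  have hv0 : v 0 = 0 := by
    simp [hv, hu, h0]
  obtain ⟨c, hc, hcslope⟩ := exists_deriv_eq_slope v ht (hvcont.continuousOn)
    (fun x hx => ((hvder x hx.1).differentiableAt).differentiableWithinAt)
  have hderc : deriv v c = φ c := (hvder c hc.1).deriv
  have hle : φ c ≤ φ t := hmono hc.1 ht (le_of_lt hc.2)
  have hkey : v t / t = φ c := by
    rw [← hderc, hcslope, hv0, sub_zero, sub_zero]
  have h1 : v t / t ≤ p t / v t := by rw [hkey]; exact hle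
  have h2 : v t * v t ≤ t * p t := by
    have := (div_le_div_iff₀ ht (hvpos t ht)).mp h1
    linarith
  have h3 : ‖Y t‖ ^ 2 = u t := (real_inner_self_eq_norm_sq (Y t)).symm
  rw [h3]
  rw [← hvsq t]
  nlinarith
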